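/- arXiv:2305.13730 — 5 statements merged into one kernel-verified Lean document; each statement's English description precedes it below -/
import Mathlib

section
/- Fix an integer n ≥ 1. There exists a constant c > 0 such that for every odd prime power q and all matrices A, B ∈ M_n(𝔽_q), the quadratic matrix Gauss sum satisfies |G(A,B)| ≤ c · q^{(n² + ρ_A)/2}, where ρ_A is the radical invariant of A. -/
open scoped BigOperators

/-- The additive character `ψ(X) = exp((2πi/p)·Tr_{F/F_p}(Tr X))` on `n × n` matrices
over a finite field `F` of characteristic `p`. -/
noncomputable def psi (F : Type) [Field F] [Fintype F] {n : ℕ}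
    (X : Matrix (Fin n) (Fin n) F) : ℂ :=
  letI : Algebra (ZMod (ringChar F)) F := ZMod.algebra _ _
  Complex.exp (2 * Real.pi * Complex.I *
    (((Algebra.trace (ZMod (ringChar F)) F X.trace).val : ℂ) / (ringChar F : ℂ)))

/-- The radical `{X : Tr(A(XY+YX)) = 0 for all Y}` of the quadratic form
`X ↦ Tr(AX²)` on `M_n(F)`. -/
def radical (F : Type) [Field F] [Fintype F] {n : ℕ}
    (A : Matrix (Fin n) (Fin n) F) : Submodule F (Matrix (Fin n) (Fin n) F) where
  carrier := {X : Matrix (Fin n) (Fin n) F |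
    ∀ Y : Matrix (Fin n) (Fin n) F, (A * (X * Y + Y * X)).trace = 0}
  zero_mem' := by intro Y; simp
  add_mem' := by
    intro X₁ X₂ h₁ h₂ Y
    have e : A * ((X₁ + X₂) * Y + Y * (X₁ + X₂))
        = A * (X₁ * Y + Y * X₁) + A * (X₂ * Y + Y * X₂) := by noncomm_ring
    show (A * ((X₁ + X₂) * Y + Y * (X₁ + X₂))).trace = 0
    rw [e, Matrix.trace_add, h₁ Y, h₂ Y, add_zero]
  smul_mem' := by
    intro c X h Y
    have e : A * ((c • X) * Y + Y * (c • X)) = c • (A * (X * Y + Y * X)) := by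
      rw [smul_mul_assoc, Matrix.mul_smul, ← smul_add, Matrix.mul_smul]
    show (A * ((c • X) * Y + Y * (c • X))).trace = 0
    rw [e, Matrix.trace_smul, h Y, smul_zero]

/-- The radical invariant `ρ_A`: the `F`-dimension of the radical of `X ↦ Tr(AX²)`. -/
noncomputable def rho (F : Type) [Field F] [Fintype F] {n : ℕ}
    (A : Matrix (Fin n) (Fin n) F) : ℕ :=
  Module.finrank F (radical F A)

/-- The quadratic matrix Gauss sum `G(A,B) = Σ_X ψ(AX² + BX)`. -/
noncomputable def matGaussSum (F : Type) [Field F] [Fintype F] {n : ℕ}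
    (A B : Matrix (Fin n) (Fin n) F) : ℂ :=
  ∑ X : Matrix (Fin n) (Fin n) F, psi F (A * X ^ 2 + B * X)

/-- The matrix sphere `σ_T = {X ∈ M_n(F)^r : X₁² + ⋯ + X_r² = T}`. -/
def matSphere (F : Type) [Field F] [Fintype F] [DecidableEq F] {n : ℕ} (r : ℕ)
    (T : Matrix (Fin n) (Fin n) F) : Finset (Fin r → Matrix (Fin n) (Fin n) F) :=
  Finset.univ.filter (fun X => ∑ i, (X i) ^ 2 = T)

/-- The Fourier transform `f̂(M) = q^{-rn²} Σ_A f(A) conj(ψ(M·A))` on `M_n(F)^r`. -/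
noncomputable def matFourier (F : Type) [Field F] [Fintype F] {n r : ℕ}
    (f : (Fin r → Matrix (Fin n) (Fin n) F) → ℂ)
    (M : Fin r → Matrix (Fin n) (Fin n) F) : ℂ :=
  ((Fintype.card F : ℂ) ^ (r * n ^ 2))⁻¹ *
    ∑ A : Fin r → Matrix (Fin n) (Fin n) F, f A * (starRingEnd ℂ) (psi F (∑ i, M i * A i))


/-!
Squaring and substituting `X = Y + Z` (Weyl differencing) gives
`|G(A,B)|² = Σ_Z ψ(AZ² + BZ) Σ_Y ψ(A(ZY + YZ))`. For fixed `Z`, `Y ↦ ψ(A(ZY + YZ))` is a character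
of `M_n(𝔽_q)`; by nondegeneracy of the trace form of `𝔽_q/𝔽_p` it is trivial exactly when `Z` lies
in the radical of `X ↦ Tr(AX²)`, so the inner sum is `q^{n²}` or `0`. Hence
`|G(A,B)|² ≤ q^{n² + ρ_A}`, and `c = 1` works.
-/

open Matrix

instance (R : Type*) [Ring R] [Finite R] [Nontrivial R] : NeZero (ringChar R) :=
  ⟨CharP.char_ne_zero_of_finite R (ringChar R)⟩

theorem sum_mul_conj_sum_eq_sum_shift {V : Type*} [AddCommGroup V] [Fintype V] (g : V → ℂ) :
    (∑ x, g x) * starRingEnd ℂ (∑ y, g y) = ∑ z, ∑ y, g (y + z) * starRingEnd ℂ (g y) := by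
  rw [map_sum, Finset.sum_mul_sum, Finset.sum_comm (s := Finset.univ) (t := Finset.univ)]
  conv_rhs => rw [Finset.sum_comm]
  refine Finset.sum_congr rfl fun y _ => ?_
  exact (Equiv.sum_comp (Equiv.addLeft y) (fun x => g x * starRingEnd ℂ (g y))).symm

section MatrixCharacter

variable {F : Type} [Field F] [Fintype F] {n : ℕ}

noncomputable def matTraceToZMod : Matrix (Fin n) (Fin n) F →+ ZMod (ringChar F) :=
  letI := ZMod.algebra F (ringChar F)
  (Algebra.trace (ZMod (ringChar F)) F).toAddMonoidHom.comp (traceAddMonoidHom (Fin n) F)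

noncomputable def psiChar : AddChar (Matrix (Fin n) (Fin n) F) ℂ :=
  ZMod.stdAddChar.compAddMonoidHom matTraceToZMod

theorem psiChar_apply (X : Matrix (Fin n) (Fin n) F) : psiChar X = psi F X := by
  simp [psiChar, matTraceToZMod, psi, ZMod.stdAddChar_apply, ZMod.toCircle_apply, mul_div_assoc]

theorem psi_add (X Y : Matrix (Fin n) (Fin n) F) : psi F (X + Y) = psi F X * psi F Y := by
  simp only [← psiChar_apply, AddChar.map_add_eq_mul]

theorem norm_psi (X : Matrix (Fin n) (Fin n) F) : ‖psi F X‖ = 1 := by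
  rw [← psiChar_apply, AddChar.norm_apply]

theorem conj_psi (X : Matrix (Fin n) (Fin n) F) : starRingEnd ℂ (psi F X) = psi F (-X) := by
  rw [← psiChar_apply, ← psiChar_apply, AddChar.map_neg_eq_conj]

theorem psi_eq_one_iff (X : Matrix (Fin n) (Fin n) F) :
    psi F X = 1 ↔ matTraceToZMod X = 0 := by
  rw [← psiChar_apply, psiChar, AddChar.compAddMonoidHom_apply,
    ← (ZMod.stdAddChar (N := ringChar F)).map_zero_eq_one, ZMod.injective_stdAddChar.eq_iff]

theorem forall_psi_smul_eq_one_iff (X : Matrix (Fin n) (Fin n) F) :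
    (∀ b : F, psi F (b • X) = 1) ↔ X.trace = 0 := by
  let := ZMod.algebra F (ringChar F)
  have key (b : F) :
      matTraceToZMod (b • X) = Algebra.trace (ZMod (ringChar F)) F (X.trace * b) := by
    simp [matTraceToZMod, mul_comm]
  simp only [psi_eq_one_iff, key]
  refine ⟨fun h => by_contra fun hX => ?_, fun h b => by simp [h]⟩
  obtain ⟨b, hb⟩ := FiniteField.trace_to_zmod_nondegenerate F hX
  exact hb (h b)

theorem mem_radical_iff_forall_psi (A Z : Matrix (Fin n) (Fin n) F) :
    Z ∈ radical F A ↔ ∀ Y, psi F (A * (Z * Y + Y * Z)) = 1 := by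
  have hsmul (b : F) (Y : Matrix (Fin n) (Fin n) F) :
      A * (Z * (b • Y) + b • Y * Z) = b • (A * (Z * Y + Y * Z)) := by
    rw [mul_smul_comm, smul_mul_assoc, ← smul_add, mul_smul_comm]
  refine ⟨fun h Y => by simpa using (forall_psi_smul_eq_one_iff _).2 (h Y) 1, fun h Y => ?_⟩
  exact (forall_psi_smul_eq_one_iff _).1 fun b => hsmul b Y ▸ h (b • Y)

theorem card_matrix : Fintype.card (Matrix (Fin n) (Fin n) F) = Fintype.card F ^ n ^ 2 := by
  rw [Module.card_eq_pow_finrank (K := F), Module.finrank_matrix, Fintype.card_fin,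
    Module.finrank_self, mul_one, sq]

theorem card_radical (A : Matrix (Fin n) (Fin n) F) :
    Nat.card (radical F A) = Fintype.card F ^ rho F A := by
  rw [Module.natCard_eq_pow_finrank (K := F), Nat.card_eq_fintype_card, rho]

theorem sum_psi_addMonoidHom {V : Type*} [AddCommGroup V] [Fintype V]
    (f : V →+ Matrix (Fin n) (Fin n) F) [Decidable (∀ v, psi F (f v) = 1)] :
    ∑ v, psi F (f v) = if ∀ v, psi F (f v) = 1 then (Fintype.card V : ℂ) else 0 := by
  simpa [psiChar_apply, AddChar.eq_zero_iff] using AddChar.sum_eq_ite (psiChar.compAddMonoidHom f)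

theorem sum_psi_anticommutator (A Z : Matrix (Fin n) (Fin n) F) [Decidable (Z ∈ radical F A)] :
    ∑ Y, psi F (A * (Z * Y + Y * Z)) =
      if Z ∈ radical F A then (Fintype.card F ^ n ^ 2 : ℂ) else 0 := by
  classical
  have := sum_psi_addMonoidHom
    ((AddMonoidHom.mulLeft A).comp (AddMonoidHom.mulLeft Z + AddMonoidHom.mulRight Z))
  simp only [AddMonoidHom.comp_apply, AddMonoidHom.add_apply, AddMonoidHom.coe_mulLeft,
    AddMonoidHom.coe_mulRight] at this
  simp only [this, card_matrix, Nat.cast_pow, ← mem_radical_iff_forall_psi]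

theorem psi_quadratic_add (A B Y Z : Matrix (Fin n) (Fin n) F) :
    psi F (A * (Y + Z) ^ 2 + B * (Y + Z)) * starRingEnd ℂ (psi F (A * Y ^ 2 + B * Y)) =
      psi F (A * Z ^ 2 + B * Z) * psi F (A * (Z * Y + Y * Z)) := by
  rw [conj_psi, ← psi_add, ← psi_add]
  congr 1
  noncomm_ring

theorem norm_matGaussSum_sq_le (A B : Matrix (Fin n) (Fin n) F) :
    ‖matGaussSum F A B‖ ^ 2 ≤ (Fintype.card F : ℝ) ^ (n ^ 2 + rho F A) := by
  classical
  have hdiff : ((‖matGaussSum F A B‖ ^ 2 : ℝ) : ℂ) =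
      ∑ Z, psi F (A * Z ^ 2 + B * Z) * ∑ Y, psi F (A * (Z * Y + Y * Z)) := by
    push_cast
    rw [← Complex.mul_conj', matGaussSum, sum_mul_conj_sum_eq_sum_shift]
    simp_rw [psi_quadratic_add, Finset.mul_sum]
  calc ‖matGaussSum F A B‖ ^ 2
      = ‖∑ Z, psi F (A * Z ^ 2 + B * Z) * ∑ Y, psi F (A * (Z * Y + Y * Z))‖ := by
        rw [← hdiff, Complex.norm_real, Real.norm_of_nonneg (by positivity)]
    _ ≤ ∑ Z, ‖∑ Y, psi F (A * (Z * Y + Y * Z))‖ := by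
        refine (norm_sum_le _ _).trans_eq ?_
        simp_rw [norm_mul, norm_psi, one_mul]
    _ = Fintype.card (radical F A) * (Fintype.card F : ℝ) ^ n ^ 2 := by
        simp_rw [sum_psi_anticommutator, apply_ite norm, norm_zero, ← Finset.sum_filter]
        simp [Fintype.card_subtype]
    _ = (Fintype.card F : ℝ) ^ (n ^ 2 + rho F A) := by
        rw [← Nat.card_eq_fintype_card, card_radical, pow_add, mul_comm]
        norm_cast

end MatrixCharacter

theorem matGaussSum_bound_general (n : ℕ) :
    ∃ c : ℝ, 0 < c ∧
      ∀ (F : Type) [Field F] [Fintype F],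
        Odd (Fintype.card F) →
        ∀ A B : Matrix (Fin n) (Fin n) F,
          ‖matGaussSum F A B‖ ≤
            c * (Fintype.card F : ℝ) ^ ((((n : ℝ) ^ 2) + (rho F A : ℝ)) / 2) := by
  refine ⟨1, one_pos, fun F _ _ _ A B => ?_⟩
  have hexp : (n : ℝ) ^ 2 + rho F A = ((n ^ 2 + rho F A : ℕ) : ℝ) := by norm_cast
  rw [one_mul, Real.rpow_div_two_eq_sqrt _ (Nat.cast_nonneg _), hexp, Real.rpow_natCast,
    ← pow_le_pow_iff_left₀ (norm_nonneg _) (by positivity) two_ne_zero, ← pow_mul, mul_comm,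
    pow_mul, Real.sq_sqrt (Nat.cast_nonneg _)]
  exact norm_matGaussSum_sq_le A B

/-- Proposition 3.3: `|G(A,B)| ≤ c · q^{(n² + ρ_A)/2}` for all `A, B ∈ M_n(F_q)`,
`q` odd, with `c` depending only on `n`. -/
theorem matGaussSum_bound (n : ℕ) (hn : 1 ≤ n) :
    ∃ c : ℝ, 0 < c ∧
      ∀ (F : Type) [Field F] [Fintype F],
        Odd (Fintype.card F) →
        ∀ A B : Matrix (Fin n) (Fin n) F,
          ‖matGaussSum F A B‖ ≤
            c * (Fintype.card F : ℝ) ^ ((((n : ℝ) ^ 2) + (rho F A : ℝ)) / 2) :=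
  matGaussSum_bound_general n
end

section
/- Let r ≥ 4 be an integer. There exists a constant c > 0 such that for every odd prime power q and every T ∈ M_2(𝔽_q), the matrix sphere σ_T ⊆ (M_2(𝔽_q))^r satisfies |#σ_T − q^{4(r−1)}| ≤ c·q^{3r−1}; in particular #σ_T ∼ q^{4r−4} as q → ∞. -/
open scoped BigOperators

/-!
Expanding the indicator of `X₁² + ⋯ + X_r² = T` in the additive characters `ψ (tr (A * ·))` of
`M₂(F)` gives `#σ_T · q⁴ = Σ_A ψ(-tr(AT)) G(A)^r` with `G(A) = Σ_X ψ(tr(AX²))`, and the term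
`A = 0` is `q^{4r}`. Substituting `X = Y + H` in `|G(A)|²` kills every `H` that does not
anticommute with `A`, so `|G(A)|² ≤ q⁴ · #{H | AH + HA = 0}`. In odd characteristic the polarized
Cayley–Hamilton identity shows that this anticommutant has at most `q` elements when
`tr A ≠ 0` and at most `q²` when `A ≠ 0` is traceless; as there are only `q³` traceless `A`,
the terms with `A ≠ 0` add up to at most `2 q^{3r+3}` as soon as `r ≥ 2`.
-/

open Finset Matrix

lemma AddChar.map_sum_eq_prod {A M : Type*} [AddCommMonoid A] [CommMonoid M]
    (ψ : AddChar A M) {κ : Type*} (s : Finset κ) (f : κ → A) :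
    ψ (∑ i ∈ s, f i) = ∏ i ∈ s, ψ (f i) := by
  classical
  induction s using Finset.induction_on with
  | empty => simp
  | insert a s ha ih => rw [sum_insert ha, prod_insert ha, map_add_eq_mul, ih]

lemma Matrix.card_fin_two {α : Type*} [Fintype α] :
    Fintype.card (Matrix (Fin 2) (Fin 2) α) = Fintype.card α ^ 4 := by
  rw [Fintype.card_congr Matrix.of.symm]
  simp [← pow_mul]

lemma pow_le_pow_of_sq_le_pow {x q : ℝ} (hx : 0 ≤ x) (hq : 1 ≤ q) {a b r : ℕ}
    (h : x ^ 2 ≤ q ^ a) (hab : a * r ≤ 2 * b) : x ^ r ≤ q ^ b := by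
  refine (pow_le_pow_iff_left₀ (by positivity) (by positivity) two_ne_zero).1 ?_
  calc (x ^ r) ^ 2 = (x ^ 2) ^ r := pow_right_comm x r 2
    _ ≤ (q ^ a) ^ r := by gcongr
    _ ≤ q ^ (2 * b) := by rw [← pow_mul]; exact pow_le_pow_right₀ hq hab
    _ = (q ^ b) ^ 2 := by rw [mul_comm, pow_mul]

section CommRing
variable {R : Type*} [CommRing R] {ι : Type*} [Fintype ι] [DecidableEq ι]

lemma Matrix.trace_mul_add_sq_sub (A Y H : Matrix ι ι R) :
    (A * (Y + H) ^ 2).trace - (A * Y ^ 2).trace =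
      (A * H ^ 2).trace + ((A * H + H * A) * Y).trace := by
  have expand : A * (Y + H) ^ 2 = A * Y ^ 2 + A * H ^ 2 + A * H * Y + A * Y * H := by
    noncomm_ring
  rw [expand, add_mul, trace_add, trace_add, trace_add, trace_add,
    trace_mul_cycle A Y H, mul_assoc H A Y]
  ring

/-- Polarization of the Cayley–Hamilton identity `X ^ 2 = X.trace • X - X.det • 1`. -/
lemma Matrix.mul_add_mul_eq_fin_two (A H : Matrix (Fin 2) (Fin 2) R) :
    A * H + H * A = A.trace • H + H.trace • A +
      ((A * H).trace - A.trace * H.trace) • (1 : Matrix (Fin 2) (Fin 2) R) := by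
  ext i j
  fin_cases i <;> fin_cases j <;>
    simp [mul_apply, trace_fin_two, Fin.sum_univ_two] <;> ring

end CommRing

lemma Matrix.exists_trace_mul_ne_zero {F : Type*} [Field F] {ι : Type*} [Fintype ι]
    [DecidableEq ι] {A : Matrix ι ι F} (hA : A ≠ 0) :
    ∃ B : Matrix ι ι F, (A * B).trace ≠ 0 := by
  obtain ⟨i, j, hij⟩ : ∃ i j, A i j ≠ 0 := by
    by_contra! h
    exact hA (Matrix.ext h)
  exact ⟨single j i 1, by simpa [trace_mul_single] using hij⟩

section MatrixSphere
variable {F : Type} [Field F] [Fintype F] [DecidableEq F] {ι : Type*} [Fintype ι] [DecidableEq ι]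
  {ψ : AddChar F ℂ}

lemma sum_addChar_trace_mul (hψ : ψ.IsPrimitive) (M : Matrix ι ι F) :
    ∑ X, ψ (M * X).trace = if M = 0 then (Fintype.card (Matrix ι ι F) : ℂ) else 0 := by
  split_ifs with hM
  · simp [hM]
  obtain ⟨B, hB⟩ := exists_trace_mul_ne_zero hM
  obtain ⟨x, hx⟩ := AddChar.ne_one_iff.1 (hψ hB)
  let φ : AddChar (Matrix ι ι F) ℂ :=
    ψ.compAddMonoidHom ((traceAddMonoidHom ι F).comp (AddMonoidHom.mulLeft M))
  refine AddChar.sum_eq_zero_of_ne_one (ψ := φ) (AddChar.ne_one_iff.2 ⟨x • B, ?_⟩)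
  simpa [φ, mul_comm x] using hx

variable (ψ) in
/-- `matGaussSum F A 0`, with an arbitrary additive character `ψ` in place of `psi`. -/
noncomputable def matQuadGaussSum (A : Matrix ι ι F) : ℂ :=
  ∑ X, ψ (A * X ^ 2).trace

omit [DecidableEq F] in
lemma matQuadGaussSum_zero :
    matQuadGaussSum ψ (0 : Matrix ι ι F) = Fintype.card (Matrix ι ι F) := by
  simp [matQuadGaussSum]

def anticommutant (A : Matrix ι ι F) : Finset (Matrix ι ι F) :=
  univ.filter fun H => A * H + H * A = 0

lemma mem_anticommutant {A H : Matrix ι ι F} : H ∈ anticommutant A ↔ A * H + H * A = 0 := by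
  simp [anticommutant]

lemma norm_matQuadGaussSum_sq_le (hψ : ψ.IsPrimitive) (A : Matrix ι ι F) :
    ‖matQuadGaussSum ψ A‖ ^ 2 ≤
      Fintype.card (Matrix ι ι F) * (anticommutant A).card := by
  have key : (‖matQuadGaussSum ψ A‖ ^ 2 : ℂ) =
      Fintype.card (Matrix ι ι F) * ∑ H ∈ anticommutant A, ψ (A * H ^ 2).trace := by
    calc (‖matQuadGaussSum ψ A‖ ^ 2 : ℂ)
        = ∑ Y, ∑ X, ψ (A * X ^ 2).trace * ψ (-(A * Y ^ 2).trace) := by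
          rw [← Complex.mul_conj', matQuadGaussSum, map_sum, sum_mul_sum, sum_comm]
          simp [AddChar.map_neg_eq_conj]
      _ = ∑ Y, ∑ H, ψ (A * H ^ 2).trace * ψ ((A * H + H * A) * Y).trace := by
          refine sum_congr rfl fun Y _ => ?_
          refine (Fintype.sum_equiv (Equiv.addLeft Y) _ _ fun H => ?_).symm
          rw [Equiv.coe_addLeft, ← AddChar.map_add_eq_mul, ← AddChar.map_add_eq_mul,
            ← sub_eq_add_neg, trace_mul_add_sq_sub]
      _ = ∑ H, ψ (A * H ^ 2).trace * ∑ Y, ψ ((A * H + H * A) * Y).trace := by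
          rw [sum_comm]; simp_rw [mul_sum]
      _ = _ := by
          simp_rw [sum_addChar_trace_mul hψ, mul_ite, mul_zero, ← sum_filter, ← sum_mul,
            mul_comm]
          rfl
  have hnorm := congrArg norm key
  rw [norm_pow, Complex.norm_real, norm_norm, norm_mul, Complex.norm_natCast] at hnorm
  rw [hnorm]
  gcongr
  exact (norm_sum_le _ _).trans (by simp)

lemma card_matSphere_mul_card (hψ : ψ.IsPrimitive) {n : ℕ} (r : ℕ)
    (T : Matrix (Fin n) (Fin n) F) :
    ((matSphere F r T).card : ℂ) * Fintype.card (Matrix (Fin n) (Fin n) F) =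
      ∑ A, ψ (-(A * T)).trace * matQuadGaussSum ψ A ^ r := by
  symm
  calc ∑ A, ψ (-(A * T)).trace * matQuadGaussSum ψ A ^ r
      = ∑ A, ∑ X : Fin r → Matrix (Fin n) (Fin n) F, ψ ((∑ i, X i ^ 2 - T) * A).trace := by
        refine sum_congr rfl fun A _ => ?_
        rw [matQuadGaussSum, Fintype.sum_pow, mul_sum]
        refine sum_congr rfl fun X _ => ?_
        rw [← AddChar.map_sum_eq_prod, ← AddChar.map_add_eq_mul, trace_mul_comm, mul_sub,
          mul_sum, trace_sub, trace_sum, trace_neg, neg_add_eq_sub]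
    _ = ∑ X : Fin r → Matrix (Fin n) (Fin n) F,
          if ∑ i, X i ^ 2 = T then (Fintype.card (Matrix (Fin n) (Fin n) F) : ℂ) else 0 := by
        rw [sum_comm]
        simp_rw [sum_addChar_trace_mul hψ, sub_eq_zero]
    _ = _ := by rw [← sum_filter, sum_const, nsmul_eq_mul]; rfl

lemma card_matSphere_sub_mul_card_eq (hψ : ψ.IsPrimitive) {n r : ℕ} (hr : r ≠ 0)
    (T : Matrix (Fin n) (Fin n) F) :
    (((matSphere F r T).card : ℂ) - Fintype.card (Matrix (Fin n) (Fin n) F) ^ (r - 1)) *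
        Fintype.card (Matrix (Fin n) (Fin n) F) =
      ∑ A ∈ univ.erase 0, ψ (-(A * T)).trace * matQuadGaussSum ψ A ^ r := by
  have h := card_matSphere_mul_card hψ r T
  rw [← add_sum_erase _ _ (mem_univ 0), zero_mul, neg_zero, trace_zero, AddChar.map_zero_eq_one,
    one_mul, matQuadGaussSum_zero] at h
  rw [sub_mul, h, ← pow_succ, Nat.sub_add_cancel (Nat.one_le_iff_ne_zero.2 hr),
    add_sub_cancel_left]

lemma trace_mul_eq_zero_of_mem_anticommutant {ι : Type*} [Fintype ι] [DecidableEq ι]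
    (h2 : (2 : F) ≠ 0) {A H : Matrix ι ι F} (hH : H ∈ anticommutant A) :
    (A * H).trace = 0 := by
  have h := congrArg trace (mem_anticommutant.1 hH)
  rw [trace_add, trace_mul_comm H A, ← two_mul, trace_zero] at h
  exact (mul_eq_zero.1 h).resolve_left h2

lemma card_anticommutant_le_of_trace_ne_zero (h2 : (2 : F) ≠ 0) {A : Matrix (Fin 2) (Fin 2) F}
    (hA : A.trace ≠ 0) : (anticommutant A).card ≤ Fintype.card F := by
  have hsmul : ∀ H ∈ anticommutant A,
      A.trace • H = (A.trace * H.trace) • (1 : Matrix _ _ F) - H.trace • A := by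
    intro H hH
    have h := mul_add_mul_eq_fin_two A H
    rw [mem_anticommutant.1 hH, trace_mul_eq_zero_of_mem_anticommutant h2 hH, zero_sub] at h
    linear_combination (norm := module) -h
  refine (card_le_card_of_injOn trace (fun _ _ => mem_univ _) fun H hH H' hH' e => ?_).trans_eq
    (card_univ)
  exact smul_right_injective _ hA <| (hsmul H hH).trans (e ▸ (hsmul H' hH').symm)

lemma card_anticommutant_le_of_trace_eq_zero (h2 : (2 : F) ≠ 0) {A : Matrix (Fin 2) (Fin 2) F}
    (hA0 : A ≠ 0) (hA : A.trace = 0) : (anticommutant A).card ≤ Fintype.card F ^ 2 := by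
  have htrace : ∀ H ∈ anticommutant A, H.trace = 0 := by
    intro H hH
    have h := mul_add_mul_eq_fin_two A H
    rw [mem_anticommutant.1 hH, trace_mul_eq_zero_of_mem_anticommutant h2 hH, hA] at h
    simp only [zero_smul, zero_add, zero_mul, sub_zero, add_zero] at h
    exact (smul_eq_zero.1 h.symm).resolve_right hA0
  obtain ⟨B, hB⟩ := exists_trace_mul_ne_zero hA0
  -- `tr (A * ·)` recovers `s` and then `tr` recovers `t`.
  have hinj : Set.InjOn
      (fun p : Matrix (Fin 2) (Fin 2) F × F × F => p.1 + p.2.1 • B + p.2.2 • 1)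
      (anticommutant A ×ˢ (univ : Finset (F × F)) : Finset _) := by
    rintro ⟨H, s, t⟩ hH ⟨H', s', t'⟩ hH' e
    simp only [coe_product, coe_univ, Set.mem_prod, mem_coe, Set.mem_univ, and_true] at hH hH'
    have hs : s = s' := by
      have := congrArg (fun X => (A * X).trace) e
      simp only [mul_add, Matrix.mul_smul, mul_one, trace_add, trace_smul, hA, mul_zero,
        trace_mul_eq_zero_of_mem_anticommutant h2 hH, trace_mul_eq_zero_of_mem_anticommutant h2 hH',
        smul_eq_mul, zero_add, add_zero] at this
      exact mul_right_cancel₀ hB this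
    have ht : t = t' := by
      have := congrArg trace e
      simp only [trace_add, trace_smul, trace_one, htrace H hH, htrace H' hH', hs, smul_eq_mul,
        zero_add, Fintype.card_fin, Nat.cast_ofNat] at this
      exact mul_right_cancel₀ h2 (add_left_cancel this)
    subst hs ht
    simpa using e
  have hcard := card_le_card_of_injOn _ (fun _ _ => mem_univ _) hinj
  rw [card_product, card_univ, card_univ, Fintype.card_prod, Matrix.card_fin_two] at hcard
  rw [← sq, show Fintype.card F ^ 4 = Fintype.card F ^ 2 * Fintype.card F ^ 2 by ring] at hcard
  exact Nat.le_of_mul_le_mul_right hcard (pow_pos Fintype.card_pos 2)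

lemma card_filter_trace_eq_zero_mul_card_le {ι : Type*} [Fintype ι] [DecidableEq ι] (i : ι) :
    (univ.filter fun A : Matrix ι ι F => A.trace = 0).card * Fintype.card F ≤
      Fintype.card (Matrix ι ι F) := by
  have hinj : Set.InjOn (fun p : Matrix ι ι F × F => p.1 + single i i p.2)
      ((univ.filter fun A : Matrix ι ι F => A.trace = 0) ×ˢ (univ : Finset F) : Finset _) := by
    rintro ⟨A, t⟩ hA ⟨A', t'⟩ hA' e
    simp only [coe_product, coe_filter, coe_univ, Set.mem_prod, Set.mem_ofPred_eq,
      Set.mem_univ, and_true] at hA hA'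
    have ht : t = t' := by simpa [hA, hA'] using congrArg trace e
    subst ht
    simpa using e
  simpa using card_le_card_of_injOn _ (fun _ _ => mem_univ _) hinj

lemma norm_matQuadGaussSum_sq_le_of_trace_ne_zero (hψ : ψ.IsPrimitive) (h2 : (2 : F) ≠ 0)
    {A : Matrix (Fin 2) (Fin 2) F} (hA : A.trace ≠ 0) :
    ‖matQuadGaussSum ψ A‖ ^ 2 ≤ (Fintype.card F : ℝ) ^ 5 := by
  refine (norm_matQuadGaussSum_sq_le hψ A).trans ?_
  rw [Matrix.card_fin_two, Nat.cast_pow, show 5 = 4 + 1 by rfl, pow_add, pow_one]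
  gcongr
  exact_mod_cast card_anticommutant_le_of_trace_ne_zero h2 hA

lemma norm_matQuadGaussSum_sq_le_of_trace_eq_zero (hψ : ψ.IsPrimitive) (h2 : (2 : F) ≠ 0)
    {A : Matrix (Fin 2) (Fin 2) F} (hA0 : A ≠ 0) (hA : A.trace = 0) :
    ‖matQuadGaussSum ψ A‖ ^ 2 ≤ (Fintype.card F : ℝ) ^ 6 := by
  refine (norm_matQuadGaussSum_sq_le hψ A).trans ?_
  rw [Matrix.card_fin_two, show 6 = 4 + 2 by rfl, pow_add, Nat.cast_pow]
  gcongr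
  exact_mod_cast card_anticommutant_le_of_trace_eq_zero h2 hA0 hA

lemma norm_matQuadGaussSum_pow_le (hψ : ψ.IsPrimitive) (h2 : (2 : F) ≠ 0) {r : ℕ}
    (hr : 2 ≤ r) {A : Matrix (Fin 2) (Fin 2) F} (hA : A ≠ 0) :
    ‖matQuadGaussSum ψ A‖ ^ r ≤
      (if A.trace = 0 then (Fintype.card F : ℝ) ^ (3 * r) else 0) +
        (Fintype.card F : ℝ) ^ (3 * r - 1) := by
  have hq : (1 : ℝ) ≤ Fintype.card F := Nat.one_le_cast.2 Fintype.card_pos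
  split_ifs with htr
  · refine le_add_of_le_of_nonneg ?_ (by positivity)
    exact pow_le_pow_of_sq_le_pow (norm_nonneg _) hq
      (norm_matQuadGaussSum_sq_le_of_trace_eq_zero hψ h2 hA htr) (by omega)
  · rw [zero_add]
    exact pow_le_pow_of_sq_le_pow (norm_nonneg _) hq
      (norm_matQuadGaussSum_sq_le_of_trace_ne_zero hψ h2 htr) (by omega)

lemma norm_sum_erase_zero_mul_matQuadGaussSum_pow_le (hψ : ψ.IsPrimitive) (h2 : (2 : F) ≠ 0)
    {r : ℕ} (hr : 2 ≤ r) (T : Matrix (Fin 2) (Fin 2) F) :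
    ‖∑ A ∈ univ.erase 0, ψ (-(A * T)).trace * matQuadGaussSum ψ A ^ r‖ ≤
      2 * (Fintype.card F : ℝ) ^ (3 * r + 3) := by
  have htraceless : ((univ.filter fun A : Matrix (Fin 2) (Fin 2) F => A.trace = 0).card : ℝ) ≤
      (Fintype.card F : ℝ) ^ 3 := by
    have h := card_filter_trace_eq_zero_mul_card_le (F := F) (0 : Fin 2)
    rw [Matrix.card_fin_two, pow_succ] at h
    exact_mod_cast Nat.le_of_mul_le_mul_right h Fintype.card_pos
  set q := (Fintype.card F : ℝ)
  calc _ ≤ ∑ A ∈ univ.erase 0, ‖matQuadGaussSum ψ A‖ ^ r := by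
        refine (norm_sum_le _ _).trans_eq (sum_congr rfl fun A _ => ?_)
        rw [norm_mul, AddChar.norm_apply, one_mul, norm_pow]
    _ ≤ ∑ A ∈ univ.erase (0 : Matrix (Fin 2) (Fin 2) F),
          ((if A.trace = 0 then q ^ (3 * r) else 0) + q ^ (3 * r - 1)) :=
        sum_le_sum fun A hA => norm_matQuadGaussSum_pow_le hψ h2 hr (ne_of_mem_erase hA)
    _ ≤ ∑ A : Matrix (Fin 2) (Fin 2) F,
          ((if A.trace = 0 then q ^ (3 * r) else 0) + q ^ (3 * r - 1)) :=
        sum_le_sum_of_subset_of_nonneg (erase_subset _ _) fun _ _ _ => by positivity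
    _ = (univ.filter fun A : Matrix (Fin 2) (Fin 2) F => A.trace = 0).card * q ^ (3 * r) +
          q ^ 4 * q ^ (3 * r - 1) := by
        rw [sum_add_distrib, sum_ite, sum_const_zero, add_zero, sum_const, sum_const, card_univ,
          Matrix.card_fin_two, nsmul_eq_mul, nsmul_eq_mul]
        push_cast
        rfl
    _ ≤ q ^ 3 * q ^ (3 * r) + q ^ 4 * q ^ (3 * r - 1) := by gcongr
    _ = 2 * q ^ (3 * r + 3) := by
        rw [← pow_add, ← pow_add, show 4 + (3 * r - 1) = 3 * r + 3 by omega, add_comm 3]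
        ring

end MatrixSphere

/-- Proposition 4.1, size part: for `r ≥ 4`, `|#σ_T - q^{4(r-1)}| ≤ c q^{3r-1}`
uniformly over odd `q` and `T ∈ M_2(F_q)`. -/
theorem matSphere_card_rank_two (r : ℕ) (hr : 4 ≤ r) :
    ∃ c : ℝ, 0 < c ∧
      ∀ (F : Type) [Field F] [Fintype F] [DecidableEq F],
        Odd (Fintype.card F) →
        ∀ T : Matrix (Fin 2) (Fin 2) F,
          |((matSphere F r T).card : ℝ) - (Fintype.card F : ℝ) ^ (4 * (r - 1))| ≤
            c * (Fintype.card F : ℝ) ^ (3 * r - 1) := by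
  refine ⟨2, two_pos, fun F _ _ _ hodd T => ?_⟩
  have h2 : (2 : F) ≠ 0 := Ring.two_ne_zero fun h => by
    have := FiniteField.even_card_iff_char_two.1 h
    rw [Nat.odd_iff] at hodd
    omega
  obtain ⟨ψ, hψ⟩ : ∃ ψ : AddChar F ℂ, ψ.IsPrimitive :=
    ⟨_, AddChar.FiniteField.primitiveChar_to_Complex_isPrimitive F⟩
  have hbound := norm_sum_erase_zero_mul_matQuadGaussSum_pow_le hψ h2 (show 2 ≤ r by omega) T
  rw [← card_matSphere_sub_mul_card_eq hψ (show r ≠ 0 by omega), Matrix.card_fin_two, norm_mul,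
    Complex.norm_natCast, ← Nat.cast_pow, ← pow_mul, ← Complex.ofReal_natCast,
    ← Complex.ofReal_natCast (_ ^ _), ← Complex.ofReal_sub, Complex.norm_real, Real.norm_eq_abs]
    at hbound
  push_cast at hbound
  refine le_of_mul_le_mul_right (hbound.trans_eq ?_) (by positivity : (0 : ℝ) < _ ^ 4)
  rw [mul_assoc, ← pow_add, show 3 * r - 1 + 4 = 3 * r + 3 by omega]
end

section
/- For every integer k ≥ 1 and all nonnegative real numbers e_1,…,e_k, one has k·(Σ_{i=1}^k i·e_i² + 2·Σ_{1 ≤ i < j ≤ k} i·e_i·e_j) ≤ (Σ_{i=1}^k i·e_i)² + (k−1)·(Σ_{i=1}^{k−1} i·e_i)². -/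
/-!
Write `T m = ∑_{i ≤ m} i e_i` and `Q m = ∑_{i ≤ m} i e_i² + 2 ∑_{i < j ≤ m} i e_i e_j`. Adding the
index `m + 1` gives `Q (m + 1) = Q m + (m + 1) e_{m+1}² + 2 e_{m+1} T m`, while
`T (m + 1)² = T m² + (m + 1)² e_{m+1}² + 2 (m + 1) e_{m+1} T m`; comparing the two by induction
gives `Q m ≤ T m²` for nonnegative `e`. With `k = m + 1` the same two expansions reduce the
inequality to `k Q m ≤ k T m²`.
-/

open Finset

theorem Finset.sum_Icc_sum_Icc_succ_succ_top {M : Type*} [AddCommMonoid M] {a m : ℕ}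
    (ha : a ≤ m + 1) (f : ℕ → ℕ → M) :
    ∑ i ∈ Icc a (m + 1), ∑ j ∈ Icc (i + 1) (m + 1), f i j =
      ∑ i ∈ Icc a m, ∑ j ∈ Icc (i + 1) m, f i j + ∑ i ∈ Icc a m, f i (m + 1) := by
  rw [sum_Icc_succ_top ha, Icc_eq_empty_of_lt (Nat.lt_succ_self _), sum_empty, add_zero,
    ← sum_add_distrib]
  exact sum_congr rfl fun i hi => sum_Icc_succ_top (Nat.succ_le_succ (mem_Icc.1 hi).2) _

namespace RadicalInvariant

def weightedSum (e : ℕ → ℝ) (n : ℕ) : ℝ :=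
  ∑ i ∈ Icc 1 n, (i : ℝ) * e i

def quadForm (e : ℕ → ℝ) (n : ℕ) : ℝ :=
  ∑ i ∈ Icc 1 n, (i : ℝ) * e i ^ 2 + 2 * ∑ i ∈ Icc 1 n, ∑ j ∈ Icc (i + 1) n, (i : ℝ) * e i * e j

variable (e : ℕ → ℝ)

theorem weightedSum_succ (m : ℕ) :
    weightedSum e (m + 1) = weightedSum e m + (m + 1) * e (m + 1) := by
  rw [weightedSum, sum_Icc_succ_top (by omega), Nat.cast_succ, weightedSum]

theorem quadForm_succ (m : ℕ) :
    quadForm e (m + 1) =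
      quadForm e m + (m + 1) * e (m + 1) ^ 2 + 2 * e (m + 1) * weightedSum e m := by
  rw [quadForm, sum_Icc_succ_top (by omega), sum_Icc_sum_Icc_succ_succ_top (by omega),
    quadForm, weightedSum, Nat.cast_succ, ← sum_mul _ (fun i : ℕ => (i : ℝ) * e i) (e (m + 1))]
  ring

variable {e}

theorem weightedSum_nonneg (he : ∀ i, 0 ≤ e i) (n : ℕ) : 0 ≤ weightedSum e n :=
  sum_nonneg fun i _ => mul_nonneg i.cast_nonneg (he i)

theorem quadForm_le_weightedSum_sq (he : ∀ i, 0 ≤ e i) (n : ℕ) :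
    quadForm e n ≤ weightedSum e n ^ 2 := by
  induction n with
  | zero => simp [quadForm, weightedSum]
  | succ m ih =>
    rw [quadForm_succ, weightedSum_succ]
    have hm : (0 : ℝ) ≤ m := m.cast_nonneg
    have heT : 0 ≤ e (m + 1) * weightedSum e m := mul_nonneg (he _) (weightedSum_nonneg he m)
    nlinarith [mul_nonneg hm (sq_nonneg (e (m + 1))), mul_nonneg hm heT]

end RadicalInvariant

open RadicalInvariant

/-- Inequality (5.4): `k(Σ_i i e_i² + 2 Σ_{i<j} i e_i e_j) ≤ (Σ_i i e_i)² + (k-1)(Σ_{i<k} i e_i)²`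
for nonnegative reals `e_1, …, e_k`. -/
theorem radical_invariant_quadratic_inequality (k : ℕ) (hk : 1 ≤ k)
    (e : ℕ → ℝ) (he : ∀ i, 0 ≤ e i) :
    (k : ℝ) * (∑ i ∈ Finset.Icc 1 k, (i : ℝ) * e i ^ 2 +
        2 * ∑ i ∈ Finset.Icc 1 k, ∑ j ∈ Finset.Icc (i + 1) k, (i : ℝ) * e i * e j) ≤
      (∑ i ∈ Finset.Icc 1 k, (i : ℝ) * e i) ^ 2 +
        ((k : ℝ) - 1) * (∑ i ∈ Finset.Icc 1 (k - 1), (i : ℝ) * e i) ^ 2 := by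
  obtain ⟨m, rfl⟩ : ∃ m, k = m + 1 := ⟨k - 1, by omega⟩
  change _ * quadForm e (m + 1) ≤ weightedSum e (m + 1) ^ 2 + _ * weightedSum e (m + 1 - 1) ^ 2
  rw [quadForm_succ, weightedSum_succ, Nat.add_sub_cancel, Nat.cast_succ, add_sub_cancel_right]
  have hQ := quadForm_le_weightedSum_sq he m
  have hm : (0 : ℝ) ≤ m := m.cast_nonneg
  nlinarith
end

section
/- Let k ≥ 2 and n ≥ 1 be integers and let e_1,…,e_k be nonnegative integers with e_k ≥ 1 and Σ_{i=1}^k i·e_i = n. Then Σ_{i=1}^k i·e_i² + 2·Σ_{1 ≤ i < j ≤ k} i·e_i·e_j ≤ n² − (k−1)(2n−k); in particular this quantity is at most n² − 2n + 2. (Consequently, a nilpotent matrix in M_n(𝔽_q) whose Jordan type is a partition with largest part k ≥ 2 has radical invariant ρ ≤ n² − 2n + 2.) -/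
/-!
With the tail sums `s i = e i + ⋯ + e k` one has `∑ s i = ∑ i * e i = n` and `ρ = ∑ s i ^ 2`.
As `e k ≥ 1`, each of the `k` tail sums is at least `1`, and a sum of squares of `k` integers
`≥ 1` with total `n` is at most `(n - k + 1) ^ 2 + k - 1 = n ^ 2 - (k - 1) * (2 * n - k)`.
-/

open Finset

theorem Finset.sum_sq_le_of_one_le {ι R : Type*} [CommRing R] [PartialOrder R] [IsOrderedRing R]
    {s : Finset ι} {f : ι → R} (hf : ∀ i ∈ s, 1 ≤ f i) :
    ∑ i ∈ s, f i ^ 2 ≤ (∑ i ∈ s, f i - #s + 1) ^ 2 + #s - 1 := by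
  have h := sum_sq_le_sq_sum_of_nonneg (f := fun i ↦ f i - 1) fun i hi ↦ sub_nonneg.2 (hf i hi)
  simp only [sub_sq, sum_add_distrib, sum_sub_distrib, ← mul_sum, sum_const, nsmul_eq_mul,
    mul_one, one_pow] at h
  linear_combination h

theorem Finset.sum_Icc_sum_Icc_eq_sum_nsmul {M : Type*} [AddCommMonoid M] (k : ℕ) (e : ℕ → M) :
    ∑ i ∈ Icc 1 k, ∑ j ∈ Icc i k, e j = ∑ j ∈ Icc 1 k, j • e j := by
  rw [sum_comm' (s' := fun j ↦ Icc 1 j) (t' := Icc 1 k) (by intro i j; simp only [mem_Icc]; omega)]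
  simp

theorem Finset.sum_sq_sum_Icc_eq {R : Type*} [CommSemiring R] (k : ℕ) (e : ℕ → R) :
    ∑ i ∈ Icc 1 k, (∑ j ∈ Icc i k, e j) ^ 2 =
      ∑ i ∈ Icc 1 k, i * e i ^ 2 + 2 * ∑ i ∈ Icc 1 k, ∑ j ∈ Icc (i + 1) k, i * e i * e j := by
  induction k with
  | zero => simp
  | succ k ih =>
    have tail : ∀ i ∈ Icc 1 k, ∑ j ∈ Icc i (k + 1), e j = ∑ j ∈ Icc i k, e j + e (k + 1) :=
      fun i hi ↦ sum_Icc_succ_top (by grind) _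
    have upper : ∀ i ∈ Icc 1 k, ∑ j ∈ Icc (i + 1) (k + 1), i * e i * e j =
        ∑ j ∈ Icc (i + 1) k, i * e i * e j + i * e i * e (k + 1) :=
      fun i hi ↦ sum_Icc_succ_top (by grind) _
    rw [sum_Icc_succ_top (by omega) fun i ↦ (∑ j ∈ Icc i (k + 1), e j) ^ 2,
      sum_Icc_succ_top (by omega) fun i ↦ (i : R) * e i ^ 2,
      sum_Icc_succ_top (by omega) fun i ↦ ∑ j ∈ Icc (i + 1) (k + 1), (i : R) * e i * e j,
      sum_congr rfl fun i hi ↦ by rw [tail i hi], sum_congr rfl upper, Icc_self, sum_singleton,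
      Icc_eq_empty_of_lt (Nat.lt_succ_self _), sum_empty]
    simp only [add_sq, sum_add_distrib, ← sum_mul, ← mul_sum, sum_const, Nat.card_Icc, ih,
      sum_Icc_sum_Icc_eq_sum_nsmul, nsmul_eq_mul]
    push_cast
    ring

theorem nilpotent_radical_invariant_bound_general (k n : ℕ) (hk : 2 ≤ k)
    (e : ℕ → ℕ) (hek : 1 ≤ e k) (hsum : ∑ i ∈ Finset.Icc 1 k, i * e i = n) :
    ((∑ i ∈ Finset.Icc 1 k, i * e i ^ 2 +
        2 * ∑ i ∈ Finset.Icc 1 k, ∑ j ∈ Finset.Icc (i + 1) k, i * e i * e j : ℕ) : ℤ) ≤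
        (n : ℤ) ^ 2 - ((k : ℤ) - 1) * (2 * (n : ℤ) - (k : ℤ)) ∧
      ((∑ i ∈ Finset.Icc 1 k, i * e i ^ 2 +
        2 * ∑ i ∈ Finset.Icc 1 k, ∑ j ∈ Finset.Icc (i + 1) k, i * e i * e j : ℕ) : ℤ) ≤
        (n : ℤ) ^ 2 - 2 * (n : ℤ) + 2 := by
  set s : ℕ → ℤ := fun i ↦ ∑ j ∈ Icc i k, (e j : ℤ)
  have hs_pos : ∀ i ∈ Icc 1 k, 1 ≤ s i := fun i hi ↦
    (Int.toNat_le.mp hek).trans (single_le_sum (fun j _ ↦ Int.natCast_nonneg (e j))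
      (right_mem_Icc.2 (mem_Icc.1 hi).2))
  have hs_sum : ∑ i ∈ Icc 1 k, s i = n := by
    simp only [s, sum_Icc_sum_Icc_eq_sum_nsmul, nsmul_eq_mul]
    exact_mod_cast hsum
  have hk_le_n : (k : ℤ) ≤ n := by
    simpa [hs_sum] using card_nsmul_le_sum (Icc 1 k) s 1 hs_pos
  have hρ : ((∑ i ∈ Icc 1 k, i * e i ^ 2 +
      2 * ∑ i ∈ Icc 1 k, ∑ j ∈ Icc (i + 1) k, i * e i * e j : ℕ) : ℤ) = ∑ i ∈ Icc 1 k, s i ^ 2 := by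
    rw [sum_sq_sum_Icc_eq]
    push_cast
    rfl
  have hbound := sum_sq_le_of_one_le hs_pos
  rw [hs_sum, Nat.card_Icc, Nat.add_sub_cancel] at hbound
  have hk' : (2 : ℤ) ≤ k := by exact_mod_cast hk
  rw [hρ]
  -- `n ^ 2 - 2 * n + 2 - ((n - k + 1) ^ 2 + k - 1) = (k - 2) * (2 * n - k - 1)`
  exact ⟨by linarith, by nlinarith [mul_nonneg (sub_nonneg.2 hk') (sub_nonneg.2 hk_le_n)]⟩

/-- Inequality (5.3) of Lemma 5.2: if `e_1, …, e_k` are the part multiplicities of a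
partition of `n` with largest part `k ≥ 2`, then the radical invariant
`Σ_i i e_i² + 2 Σ_{i<j} i e_i e_j` is at most `n² - (k-1)(2n-k)`, hence at most `n² - 2n + 2`. -/
theorem nilpotent_radical_invariant_bound (k n : ℕ) (hk : 2 ≤ k) (hn : 1 ≤ n)
    (e : ℕ → ℕ) (hek : 1 ≤ e k) (hsum : ∑ i ∈ Finset.Icc 1 k, i * e i = n) :
    ((∑ i ∈ Finset.Icc 1 k, i * e i ^ 2 +
        2 * ∑ i ∈ Finset.Icc 1 k, ∑ j ∈ Finset.Icc (i + 1) k, i * e i * e j : ℕ) : ℤ) ≤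
        (n : ℤ) ^ 2 - ((k : ℤ) - 1) * (2 * (n : ℤ) - (k : ℤ)) ∧
      ((∑ i ∈ Finset.Icc 1 k, i * e i ^ 2 +
        2 * ∑ i ∈ Finset.Icc 1 k, ∑ j ∈ Finset.Icc (i + 1) k, i * e i * e j : ℕ) : ℤ) ≤
        (n : ℤ) ^ 2 - 2 * (n : ℤ) + 2 :=
  nilpotent_radical_invariant_bound_general k n hk e hek hsum
end

section
/- Let r ≥ 1 be an integer. There exists a constant c > 0 such that for every odd prime power q, Σ_{S ∈ M_2(𝔽_q), S ≠ 0} q^{r(4 + ρ_S)/2} ≤ c·q^{3r+3}, where ρ_S is the radical invariant of S. (Consequently the sums Σ_{S ≠ 0} ψ(−ST)·G(S,0)^r and Σ_{S ≠ 0} ψ(−ST)·Π_{i=1}^r G(S,−M_i) over M_2(𝔽_q) are O(q^{3r+3}).) -/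
open scoped BigOperators

/-!
Since the trace form is nondegenerate, the radical of `X ↦ Tr(SX²)` is the kernel of
`X ↦ SX + XS`. For a nonzero `2 × 2` matrix `S` in odd characteristic this kernel has dimension
at most `2`, and it is trivial unless `tr S = 0` or `det S = 0`. At most `4q³` matrices have
vanishing trace or determinant, so the sum is at most `4q³ · q^{3r} + q⁴ · q^{2r} ≤ 5 q^{3r+3}`.
-/

open Finset Matrix

theorem anticommutator_fin_two {R : Type*} [CommRing R] (S X : Matrix (Fin 2) (Fin 2) R) :
    S * X + X * S =
      !![2 * S 0 0 * X 0 0 + S 0 1 * X 1 0 + S 1 0 * X 0 1,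
          S.trace * X 0 1 + S 0 1 * (X 0 0 + X 1 1);
        S.trace * X 1 0 + S 1 0 * (X 0 0 + X 1 1),
          2 * S 1 1 * X 1 1 + S 0 1 * X 1 0 + S 1 0 * X 0 1] := by
  ext i j
  fin_cases i <;> fin_cases j <;> simp [mul_apply, trace_fin_two] <;> ring

theorem eq_zero_of_entries_fin_two {R : Type*} [Zero R] {X : Matrix (Fin 2) (Fin 2) R}
    (h₀₀ : X 0 0 = 0) (h₀₁ : X 0 1 = 0) (h₁₀ : X 1 0 = 0) (h₁₁ : X 1 1 = 0) : X = 0 := by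
  ext i j
  fin_cases i <;> fin_cases j <;> assumption

section Radical

variable {F : Type} [Field F] [Fintype F]

theorem mem_radical_iff {n : ℕ} {A X : Matrix (Fin n) (Fin n) F} :
    X ∈ radical F A ↔ A * X + X * A = 0 := by
  have cyclic : ∀ Y, (A * (X * Y + Y * X)).trace = ((A * X + X * A) * Y).trace := fun Y => by
    rw [Matrix.mul_add, Matrix.add_mul, trace_add, trace_add, ← Matrix.mul_assoc,
      ← Matrix.mul_assoc, trace_mul_cycle A Y X]
  rw [ext_iff_trace_mul_right]
  simp only [Matrix.zero_mul, trace_zero, ← cyclic]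
  rfl

theorem rho_le_two_of_entries {n : ℕ} {A : Matrix (Fin n) (Fin n) F} (i j k l : Fin n)
    (h : ∀ X ∈ radical F A, X i j = 0 → X k l = 0 → X = 0) : rho F A ≤ 2 := by
  let entries : radical F A →ₗ[F] F × F :=
    ((entryLinearMap F F i j).prod (entryLinearMap F F k l)).comp (radical F A).subtype
  have hinj : Function.Injective entries := by
    refine (injective_iff_map_eq_zero entries).mpr fun X hX => Subtype.ext ?_
    exact h X X.2 (congrArg Prod.fst hX) (congrArg Prod.snd hX)
  simpa [rho] using LinearMap.finrank_le_finrank_of_injective hinj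

theorem mem_radical_fin_two_iff {S X : Matrix (Fin 2) (Fin 2) F} :
    X ∈ radical F S ↔
      2 * S 0 0 * X 0 0 + S 0 1 * X 1 0 + S 1 0 * X 0 1 = 0 ∧
      S.trace * X 0 1 + S 0 1 * (X 0 0 + X 1 1) = 0 ∧
      S.trace * X 1 0 + S 1 0 * (X 0 0 + X 1 1) = 0 ∧
      2 * S 1 1 * X 1 1 + S 0 1 * X 1 0 + S 1 0 * X 0 1 = 0 := by
  rw [mem_radical_iff, anticommutator_fin_two, ← Matrix.ext_iff]
  simp [Fin.forall_fin_two, and_assoc]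

theorem rho_le_two (h2 : (2 : F) ≠ 0) {S : Matrix (Fin 2) (Fin 2) F} (hS : S ≠ 0) :
    rho F S ≤ 2 := by
  by_cases ht : S.trace = 0
  · have hd : S 1 1 = -S 0 0 := by rw [trace_fin_two] at ht; linear_combination ht
    by_cases ha : S 0 0 = 0
    · by_cases hb : S 0 1 = 0
      · have hc : S 1 0 ≠ 0 := fun hc =>
          hS (eq_zero_of_entries_fin_two ha hb hc (by rw [hd, ha, neg_zero]))
        refine rho_le_two_of_entries 1 0 1 1 fun X hX hz hw => ?_
        obtain ⟨E₀₀, -, E₁₀, -⟩ := mem_radical_fin_two_iff.mp hX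
        refine eq_zero_of_entries_fin_two ?_ ?_ hz hw
        · exact mul_left_cancel₀ hc (by linear_combination E₁₀ - S.trace * hz - S 1 0 * hw)
        · exact mul_left_cancel₀ hc (by linear_combination E₀₀ - 2 * X 0 0 * ha - X 1 0 * hb)
      · refine rho_le_two_of_entries 0 1 1 1 fun X hX hy hw => ?_
        obtain ⟨E₀₀, E₀₁, -, -⟩ := mem_radical_fin_two_iff.mp hX
        refine eq_zero_of_entries_fin_two ?_ hy ?_ hw
        · exact mul_left_cancel₀ hb (by linear_combination E₀₁ - S.trace * hy - S 0 1 * hw)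
        · exact mul_left_cancel₀ hb (by linear_combination E₀₀ - 2 * X 0 0 * ha - S 1 0 * hy)
    · refine rho_le_two_of_entries 0 1 1 0 fun X hX hy hz => ?_
      obtain ⟨E₀₀, -, -, E₁₁⟩ := mem_radical_fin_two_iff.mp hX
      refine eq_zero_of_entries_fin_two ?_ hy hz ?_
      · exact mul_left_cancel₀ (mul_ne_zero h2 ha)
          (by linear_combination E₀₀ - S 0 1 * hz - S 1 0 * hy)
      · exact mul_left_cancel₀ (mul_ne_zero h2 ha)
          (by linear_combination -E₁₁ + S 0 1 * hz + S 1 0 * hy + 2 * X 1 1 * hd)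
  · refine rho_le_two_of_entries 0 0 1 1 fun X hX hx hw => ?_
    obtain ⟨-, E₀₁, E₁₀, -⟩ := mem_radical_fin_two_iff.mp hX
    refine eq_zero_of_entries_fin_two hx ?_ ?_ hw
    · exact mul_left_cancel₀ ht (by linear_combination E₀₁ - S 0 1 * hx - S 0 1 * hw)
    · exact mul_left_cancel₀ ht (by linear_combination E₁₀ - S 1 0 * hx - S 1 0 * hw)

theorem rho_eq_zero (h2 : (2 : F) ≠ 0) {S : Matrix (Fin 2) (Fin 2) F} (ht : S.trace ≠ 0)
    (hdet : S.det ≠ 0) : rho F S = 0 := by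
  suffices radical F S = ⊥ by rw [rho, this, finrank_bot]
  refine (Submodule.eq_bot_iff _).mpr fun X hX => ?_
  obtain ⟨E₀₀, E₀₁, E₁₀, E₁₁⟩ := mem_radical_fin_two_iff.mp hX
  rw [trace_fin_two] at ht E₀₁ E₁₀
  rw [det_fin_two] at hdet
  set a := S 0 0; set b := S 0 1; set c := S 1 0; set d := S 1 1
  -- `X ↦ SX + XS` has eigenvalues `λᵢ + λⱼ`, hence determinant `4 (tr S)² det S`.
  have hunit : 2 * (a + d) ^ 2 * (a * d - b * c) ≠ 0 :=
    mul_ne_zero (mul_ne_zero h2 (pow_ne_zero 2 ht)) hdet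
  have hx : X 0 0 = 0 := mul_left_cancel₀ hunit (by
    linear_combination (a + d) * (d * (a + d) - b * c) * E₀₀
      - c * d * (a + d) * E₀₁ - b * d * (a + d) * E₁₀ + b * c * (a + d) * E₁₁)
  have hw : X 1 1 = 0 := mul_left_cancel₀ hunit (by
    linear_combination (a + d) * (a * (a + d) - b * c) * E₁₁
      - c * a * (a + d) * E₀₁ - b * a * (a + d) * E₁₀ + b * c * (a + d) * E₀₀)
  refine eq_zero_of_entries_fin_two hx ?_ ?_ hw
  · exact mul_left_cancel₀ ht (by linear_combination E₀₁ - b * hx - b * hw)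
  · exact mul_left_cancel₀ ht (by linear_combination E₁₀ - c * hx - c * hw)

end Radical

section Counting

theorem card_matrix_s17 {m n α : Type*} [Fintype m] [DecidableEq m] [Fintype n] [DecidableEq n]
    [Fintype α] :
    Fintype.card (Matrix m n α) = Fintype.card α ^ (Fintype.card m * Fintype.card n) := by
  rw [Fintype.card_congr Matrix.of.symm, Fintype.card_fun, Fintype.card_fun, ← pow_mul, mul_comm]

variable {F : Type} [Field F] [Fintype F] [DecidableEq F]

def singularOrTracelessParam : Fin 4 × F × F × F → Matrix (Fin 2) (Fin 2) F
  | (0, a, b, c) => !![a, b; c, -a]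
  | (1, a, b, c) => !![a, b; c, b * c / a]
  | (2, _, c, d) => !![0, 0; c, d]
  | (3, _, b, d) => !![0, b; 0, d]

theorem card_filter_trace_eq_zero_or_det_eq_zero_le :
    #{S : Matrix (Fin 2) (Fin 2) F | S.trace = 0 ∨ S.det = 0} ≤ 4 * Fintype.card F ^ 3 := by
  calc _ ≤ #(univ : Finset (Fin 4 × F × F × F)) := by
        refine card_le_card_of_surjOn singularOrTracelessParam fun S hS => ?_
        simp only [Finset.coe_filter, Finset.mem_univ, true_and, Set.mem_ofPred_eq,
          trace_fin_two, det_fin_two] at hS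
        simp only [Finset.coe_univ, Set.image_univ, Set.mem_range]
        rw [eta_fin_two S]
        rcases hS with ht | hdet
        · refine ⟨(0, S 0 0, S 0 1, S 1 0), ?_⟩
          simp [singularOrTracelessParam]
          linear_combination -ht
        by_cases ha : S 0 0 = 0
        · rcases mul_eq_zero.mp (show S 0 1 * S 1 0 = 0 by linear_combination S 1 1 * ha - hdet)
            with hb | hc
          · exact ⟨(2, 0, S 1 0, S 1 1), by simp [singularOrTracelessParam, ha, hb]⟩
          · exact ⟨(3, 0, S 0 1, S 1 1), by simp [singularOrTracelessParam, ha, hc]⟩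
        · refine ⟨(1, S 0 0, S 0 1, S 1 0), ?_⟩
          simp [singularOrTracelessParam]
          field_simp
          linear_combination -hdet
    _ = 4 * Fintype.card F ^ 3 := by simp [Fintype.card_prod]; ring

end Counting

theorem two_ne_zero_of_odd_card {F : Type} [Field F] [Fintype F] (hodd : Odd (Fintype.card F)) :
    (2 : F) ≠ 0 :=
  Ring.two_ne_zero fun h => by
    rw [FiniteField.even_card_iff_char_two, ← Nat.even_iff] at h
    exact Nat.not_even_iff_odd.mpr hodd h

theorem rpow_rho_le {F : Type} [Field F] [Fintype F] [DecidableEq F] (h2 : (2 : F) ≠ 0)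
    {x : ℝ} (hx : 1 ≤ x) (r : ℕ) {S : Matrix (Fin 2) (Fin 2) F} (hS : S ≠ 0) :
    x ^ ((r : ℝ) * (4 + rho F S) / 2) ≤
      if S.trace = 0 ∨ S.det = 0 then x ^ (3 * r) else x ^ (2 * r) := by
  split_ifs with hbad
  · rw [← Real.rpow_natCast]
    refine Real.rpow_le_rpow_of_exponent_le hx ?_
    have : (rho F S : ℝ) ≤ 2 := mod_cast rho_le_two h2 hS
    push_cast
    nlinarith [(r.cast_nonneg : (0 : ℝ) ≤ r)]
  · obtain ⟨ht, hdet⟩ := not_or.mp hbad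
    rw [rho_eq_zero h2 ht hdet, ← Real.rpow_natCast]
    exact le_of_eq (congrArg _ (by push_cast; ring))

/-- The incidence-contribution bound of Table 1: for `r ≥ 1`,
`Σ_{S ≠ 0 in M_2(F_q)} q^{r(4+ρ_S)/2} ≤ c q^{3r+3}` uniformly over odd `q`. -/
theorem rho_sum_rank_two (r : ℕ) (hr : 1 ≤ r) :
    ∃ c : ℝ, 0 < c ∧
      ∀ (F : Type) [Field F] [Fintype F] [DecidableEq F],
        Odd (Fintype.card F) →
        ∑ S ∈ Finset.univ.filter (fun S : Matrix (Fin 2) (Fin 2) F => S ≠ 0),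
            (Fintype.card F : ℝ) ^ ((r : ℝ) * (4 + (rho F S : ℝ)) / 2) ≤
          c * (Fintype.card F : ℝ) ^ (3 * r + 3) := by
  refine ⟨5, by norm_num, fun F _ _ _ hodd => ?_⟩
  set q := Fintype.card F
  have hq : (1 : ℝ) ≤ q := mod_cast Fintype.card_pos
  calc _ ≤ ∑ S ∈ {S : Matrix (Fin 2) (Fin 2) F | S ≠ 0},
          if S.trace = 0 ∨ S.det = 0 then (q : ℝ) ^ (3 * r) else (q : ℝ) ^ (2 * r) :=
        sum_le_sum fun S hS =>
          rpow_rho_le (two_ne_zero_of_odd_card hodd) hq r (mem_filter.mp hS).2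
    _ ≤ ∑ S : Matrix (Fin 2) (Fin 2) F,
          if S.trace = 0 ∨ S.det = 0 then (q : ℝ) ^ (3 * r) else (q : ℝ) ^ (2 * r) :=
        sum_le_sum_of_subset_of_nonneg (filter_subset _ _) fun _ _ _ => by positivity
    _ ≤ #{S : Matrix (Fin 2) (Fin 2) F | S.trace = 0 ∨ S.det = 0} * (q : ℝ) ^ (3 * r)
          + Fintype.card (Matrix (Fin 2) (Fin 2) F) * (q : ℝ) ^ (2 * r) := by
        rw [sum_ite, sum_const, sum_const, nsmul_eq_mul, nsmul_eq_mul]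
        gcongr
        exact card_le_univ _
    _ ≤ (4 * q ^ 3 : ℕ) * (q : ℝ) ^ (3 * r) + (q : ℝ) ^ 4 * (q : ℝ) ^ (2 * r) := by
        gcongr
        · exact card_filter_trace_eq_zero_or_det_eq_zero_le
        · simp [q, card_matrix_s17]
    _ ≤ 5 * (q : ℝ) ^ (3 * r + 3) := by
        have : (q : ℝ) ^ (2 * r + 4) ≤ (q : ℝ) ^ (3 * r + 3) := pow_le_pow_right₀ hq (by omega)
        calc _ = 4 * (q : ℝ) ^ (3 * r + 3) + (q : ℝ) ^ (2 * r + 4) := by push_cast; ring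
          _ ≤ _ := by linarith
end
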